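/- For every fixed predicted class k̂ ∈ {1,…,K}, the Gerrity scoring matrix satisfies ∑_{e=1}^K p_e s_{k̂,e} = 0. Consequently, the Gerrity skill score is equitable: a forecaster that always predicts the same class k̂ against observations distributed according to p has expected score ∑_{e=1}^K p_e s_{k̂,e} = 0, and more generally any forecaster whose joint distribution factorizes as p_{k̂,e} = q_{k̂} p_e (predictions independent of observations, with q a probability vector) has Equitable Skill Score ESS = ∑_{k̂=1}^K ∑_{e=1}^K p_{k̂,e} s_{k̂,e} = 0. -/

import Mathlib

/-!
Each Gerrity score is an average over the `K - 1` thresholds `r` of a two-category score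
that only sees which side of `r` the prediction and the observation fall on: `a_r` if both are
below, `a_r⁻¹` if both are above, `-1` if they disagree. For a fixed prediction, the expectation
of this two-category score over observations distributed as `p` is `a_r P_r - (1 - P_r) = 0`
or `-P_r + a_r⁻¹ (1 - P_r) = 0`, so each threshold contributes zero.
-/

/-- `Pcum K p r` is the cumulative probability `P_r = ∑_{e=1}^r p_e` of the
first `r` classes (classes are `0`-indexed by `Fin K`, so this sums `p e` over
`e` with `(e : ℕ) < r`). -/
noncomputable def Pcum (K : ℕ) (p : Fin K → ℝ) (r : ℕ) : ℝ :=
  ∑ e ∈ Finset.univ.filter (fun e : Fin K => (e : ℕ) < r), p e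

/-- `aG K p r = (1 - P_r) / P_r`. -/
noncomputable def aG (K : ℕ) (p : Fin K → ℝ) (r : ℕ) : ℝ :=
  (1 - Pcum K p r) / Pcum K p r

/-- The Gerrity scoring matrix: for `1`-indexed classes `k̂ ≤ e`,
`s_{k̂,e} = s_{e,k̂} = (1/(K-1)) (∑_{r=1}^{k̂-1} a_r⁻¹ - (e - k̂) + ∑_{r=e}^{K-1} a_r)`.
Here `j k : Fin K` are the `0`-indexed classes (`j = k̂ - 1`, `k = e - 1`), and
the formula is symmetrized via `min`/`max`. -/
noncomputable def gerrity (K : ℕ) (p : Fin K → ℝ) (j k : Fin K) : ℝ :=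
  (1 / ((K : ℝ) - 1)) *
    ((∑ r ∈ Finset.Icc 1 (min (j : ℕ) (k : ℕ)), (aG K p r)⁻¹)
      - (((max (j : ℕ) (k : ℕ) : ℕ) : ℝ) - ((min (j : ℕ) (k : ℕ) : ℕ) : ℝ))
      + ∑ r ∈ Finset.Icc (max (j : ℕ) (k : ℕ) + 1) (K - 1), aG K p r)

open Finset

noncomputable def gerrityTerm (K : ℕ) (p : Fin K → ℝ) (r : ℕ) (j e : Fin K) : ℝ :=
  if (j : ℕ) < r then (if (e : ℕ) < r then aG K p r else -1)
  else (if (e : ℕ) < r then -1 else (aG K p r)⁻¹)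

variable {K : ℕ} {p : Fin K → ℝ}

lemma gerrity_eq_sum_gerrityTerm (j e : Fin K) :
    gerrity K p j e = 1 / ((K : ℝ) - 1) * ∑ r ∈ Icc 1 (K - 1), gerrityTerm K p r j e := by
  set m := min (j : ℕ) e
  set M := max (j : ℕ) e
  have hmM : m ≤ M := min_le_max
  have hMK : M ≤ K - 1 := by omega
  have below : ∑ r ∈ Ioc 0 m, gerrityTerm K p r j e = ∑ r ∈ Icc 1 m, (aG K p r)⁻¹ := by
    refine sum_congr (by ext; simp; omega) fun r hr => ?_
    rw [mem_Icc] at hr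
    rw [gerrityTerm, if_neg (by omega), if_neg (by omega)]
  have between : ∑ r ∈ Ioc m M, gerrityTerm K p r j e = -((M : ℝ) - m) := by
    rw [sum_congr rfl fun r hr => show gerrityTerm K p r j e = -1 by
      rw [mem_Ioc] at hr; unfold gerrityTerm; split_ifs <;> first | rfl | omega]
    rw [sum_const, Nat.card_Ioc, nsmul_eq_mul, Nat.cast_sub hmM]
    ring
  have above : ∑ r ∈ Ioc M (K - 1), gerrityTerm K p r j e
      = ∑ r ∈ Icc (M + 1) (K - 1), aG K p r := by
    refine sum_congr (Icc_add_one_left_eq_Ioc _ _).symm fun r hr => ?_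
    rw [mem_Icc] at hr
    rw [gerrityTerm, if_pos (by omega), if_pos (by omega)]
  have hIcc : Icc 1 (K - 1) = Ioc 0 (K - 1) := by ext; simp; omega
  rw [gerrity, hIcc, ← sum_Ioc_consecutive _ (Nat.zero_le M) hMK,
    ← sum_Ioc_consecutive _ (Nat.zero_le m) hmM, below, between, above]
  ring

lemma one_sub_Pcum (hpsum : ∑ e, p e = 1) (r : ℕ) :
    1 - Pcum K p r = ∑ e ∈ univ.filter (fun e : Fin K => ¬ (e : ℕ) < r), p e := by
  rw [← hpsum, Pcum, ← sum_filter_add_sum_filter_not univ (fun e : Fin K => (e : ℕ) < r)]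
  ring

lemma sum_mul_ite_lt (hpsum : ∑ e, p e = 1) (r : ℕ) (u v : ℝ) :
    ∑ e, p e * (if (e : ℕ) < r then u else v) = u * Pcum K p r + v * (1 - Pcum K p r) := by
  rw [one_sub_Pcum hpsum, Pcum]
  simp only [mul_ite, sum_ite, ← sum_mul]
  ring

lemma Pcum_pos (hp : ∀ e, 0 < p e) {r : ℕ} (hr : 1 ≤ r) (hrK : r < K) : 0 < Pcum K p r :=
  sum_pos' (fun e _ => (hp e).le) ⟨⟨0, by omega⟩, by simp; omega, hp _⟩

lemma Pcum_lt_one (hp : ∀ e, 0 < p e) (hpsum : ∑ e, p e = 1) {r : ℕ} (hrK : r < K) :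
    Pcum K p r < 1 := by
  rw [← sub_pos, one_sub_Pcum hpsum]
  exact sum_pos' (fun e _ => (hp e).le) ⟨⟨r, hrK⟩, by simp, hp _⟩

lemma sum_mul_gerrityTerm_eq_zero (hp : ∀ e, 0 < p e) (hpsum : ∑ e, p e = 1)
    {r : ℕ} (hr : 1 ≤ r) (hrK : r < K) (j : Fin K) :
    ∑ e, p e * gerrityTerm K p r j e = 0 := by
  have hP : Pcum K p r ≠ 0 := (Pcum_pos hp hr hrK).ne'
  have hQ : 1 - Pcum K p r ≠ 0 := (sub_pos.2 (Pcum_lt_one hp hpsum hrK)).ne'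
  unfold gerrityTerm
  split_ifs
  · rw [sum_mul_ite_lt hpsum, aG]
    field_simp
    ring
  · rw [sum_mul_ite_lt hpsum, aG, inv_div]
    field_simp
    ring

theorem gerrity_equitable_general
    (K : ℕ) (p : Fin K → ℝ)
    (hp : ∀ e, 0 < p e) (hpsum : ∑ e, p e = 1) :
    (∀ khat : Fin K, ∑ e, p e * gerrity K p khat e = 0) ∧
    (∀ q : Fin K → ℝ, (∀ khat, 0 ≤ q khat) → ∑ khat, q khat = 1 →
      ∑ khat : Fin K, ∑ e : Fin K, (q khat * p e) * gerrity K p khat e = 0) := by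
  have fixed_prediction (khat : Fin K) : ∑ e, p e * gerrity K p khat e = 0 := by
    simp_rw [gerrity_eq_sum_gerrityTerm, mul_sum, mul_left_comm (p _)]
    rw [sum_comm]
    refine sum_eq_zero fun r hr => ?_
    rw [mem_Icc] at hr
    rw [← mul_sum, sum_mul_gerrityTerm_eq_zero hp hpsum hr.1 (by omega), mul_zero]
  refine ⟨fixed_prediction, fun q _ _ => sum_eq_zero fun khat _ => ?_⟩
  simp_rw [mul_assoc, ← mul_sum, fixed_prediction, mul_zero]

/-- Equitability of the Gerrity skill score: for every fixed predicted class
`k̂`, `∑_e p_e s_{k̂,e} = 0`; consequently any forecaster whose predictions are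
independent of the observations (joint distribution `p_{k̂,e} = q_{k̂} p_e`)
has Equitable Skill Score `0`. -/
theorem gerrity_equitable
    (K : ℕ) (hK : 2 ≤ K) (p : Fin K → ℝ)
    (hp : ∀ e, 0 < p e) (hpsum : ∑ e, p e = 1) :
    (∀ khat : Fin K, ∑ e, p e * gerrity K p khat e = 0) ∧
    (∀ q : Fin K → ℝ, (∀ khat, 0 ≤ q khat) → ∑ khat, q khat = 1 →
      ∑ khat : Fin K, ∑ e : Fin K, (q khat * p e) * gerrity K p khat e = 0) :=
  gerrity_equitable_general K p hp hpsum
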